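/- arXiv:1808.06994 — 5 statements merged into one kernel-verified Lean document; each statement's English description precedes it below -/
import Mathlib

section
/- The slice-topology on ℍ is strictly finer than the Euclidean topology on ℍ; in particular, every Euclidean open set in ℍ is slice-open, but there exists a slice-open set that is not Euclidean open. -/
noncomputable section

abbrev Hq := Quaternion ℝ

/-- The sphere of imaginary units of the quaternions. -/
def SphereS : Set Hq := {q | q ^ 2 = -1}

/-- The identification of `ℂ` with the slice plane `ℂ_I = ℝ + ℝI`. -/
def sliceEmb (I : Hq) : ℂ → Hq := fun z => (z.re : Hq) + (z.im : Hq) * I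

/-- The slice complex plane `ℂ_I = ℝ + ℝI`. -/
def sliceC (I : Hq) : Set Hq := Set.range (sliceEmb I)

/-- The slice-topology on the quaternions: the quotient topology induced by the
canonical map from the disjoint union of the slices, i.e. the supremum of the
topologies coinduced by the parametrizations of the slices. -/
def sliceTopology : TopologicalSpace Hq :=
  ⨆ I ∈ SphereS, TopologicalSpace.coinduced (sliceEmb I) inferInstance

/-- The real line inside the quaternions. -/
def realLine : Set Hq := Set.range (fun x : ℝ => (x : Hq))

/-- `g : ℂ → ℍ` (thought of as a function on the slice `ℂ_I`) is (left) holomorphic on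
`U`: real differentiable with `∂ₓ g + I ∂_y g = 0`. -/
def SliceHolomorphicOn (I : Hq) (g : ℂ → Hq) (U : Set ℂ) : Prop :=
  ∀ z ∈ U, ∃ L : ℂ →L[ℝ] Hq, HasFDerivAt g L z ∧ L 1 + I * L Complex.I = 0

/-- A function on a slice-open set is slice regular if it is holomorphic on each slice. -/
def SliceRegular (f : Hq → Hq) (Ω : Set Hq) : Prop :=
  ∀ I ∈ SphereS, SliceHolomorphicOn I (f ∘ sliceEmb I) (sliceEmb I ⁻¹' Ω)

/-- `K(m)` for `K ∈ 𝕊^N` (with `K 0 = 1` by convention) and `1 ≤ m ≤ 2^N`: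
`∏_{i=N}^{1} (K_i K_{i-1})^{m_i}` where `(m_N … m_1)₂` is the binary expansion of `m-1`. -/
def zetaTerm (K : ℕ → Hq) (N m : ℕ) : Hq :=
  ((List.range N).reverse.map
    (fun j => (K (j + 1) * K j) ^ (if Nat.testBit (m - 1) j then 1 else 0))).prod

/-- The matrix `σ_N` (0-indexed): entry `(i,j)` is `(-1)^{N+(j+1)}` if
`(i+1)+(j+1) = 2^N + 1`, and `0` otherwise. -/
def sigmaMat (N : ℕ) : Matrix (Fin (2 ^ N)) (Fin (2 ^ N)) ℝ :=
  Matrix.of fun i j =>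
    if (i : ℕ) + (j : ℕ) = 2 ^ N - 1 then (-1 : ℝ) ^ (N + (j : ℕ) + 1) else 0

def QOrth (I J : Hq) : Prop := (I * star J).re = 0

/-! Every parametrisation `sliceEmb I` is Euclidean-continuous, so the slice topology is finer.
For strictness take `Ω = ℂ_I \ ℝ`. Since `ℂ_J = span {1, J}`, a slice `ℂ_J` meets `ℂ_I` off the
real line only if `J ∈ ℂ_I`; hence `Ω ∩ ℂ_J` is either `ℂ_J \ ℝ` or empty, and `Ω` is slice-open.
But `ℂ_I` is a 2-dimensional subspace of the 4-dimensional space `ℍ`, so it has empty interior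
and `Ω` is not open. -/

open Submodule Topology

lemma sliceEmb_eq_smul (J : Hq) (z : ℂ) : sliceEmb J z = z.re • (1 : Hq) + z.im • J := by
  rw [sliceEmb, Quaternion.coe_mul_eq_smul, ← Algebra.algebraMap_eq_smul_one]
  rfl

lemma sliceC_eq_span (I : Hq) : sliceC I = span ℝ {1, I} := by
  ext q
  simp only [sliceC, Set.mem_range, SetLike.mem_coe, mem_span_pair, sliceEmb_eq_smul]
  exact ⟨fun ⟨z, hz⟩ => ⟨z.re, z.im, hz⟩, fun ⟨a, b, h⟩ => ⟨⟨a, b⟩, h⟩⟩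

lemma realLine_eq_span : realLine = span ℝ {(1 : Hq)} := by
  ext q
  simp only [realLine, Set.mem_range, SetLike.mem_coe, mem_span_singleton]
  exact exists_congr fun r => by rw [← Algebra.algebraMap_eq_smul_one]; rfl

lemma sliceEmb_mem_submodule_iff {V : Submodule ℝ Hq} (hV : (1 : Hq) ∈ V) (J : Hq) {z : ℂ}
    (hz : z.im ≠ 0) : sliceEmb J z ∈ V ↔ J ∈ V := by
  rw [sliceEmb_eq_smul, V.add_mem_iff_right (V.smul_mem _ hV), V.smul_mem_iff hz]

lemma notMem_realLine_of_mem_sphereS {J : Hq} (hJ : J ∈ SphereS) : J ∉ realLine := by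
  rintro ⟨r, rfl⟩
  have h : ((r ^ 2 : ℝ) : Hq) = ((-1 : ℝ) : Hq) := by push_cast; exact hJ
  nlinarith [Quaternion.coe_injective h, sq_nonneg r]

lemma sliceEmb_mem_realLine_iff {J : Hq} (hJ : J ∈ SphereS) (z : ℂ) :
    sliceEmb J z ∈ realLine ↔ z.im = 0 := by
  by_cases hz : z.im = 0
  · simp only [hz, iff_true]
    exact ⟨z.re, by simp [sliceEmb, hz]⟩
  · rw [realLine_eq_span, SetLike.mem_coe, sliceEmb_mem_submodule_iff (mem_span_singleton_self 1) J hz,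
      ← SetLike.mem_coe, ← realLine_eq_span]
    exact iff_of_false (notMem_realLine_of_mem_sphereS hJ) hz

lemma preimage_sliceEmb_sliceC_diff_realLine (I : Hq) {J : Hq} (hJ : J ∈ SphereS) :
    sliceEmb J ⁻¹' (sliceC I \ realLine) = {z | J ∈ sliceC I ∧ z.im ≠ 0} := by
  ext z
  by_cases hz : z.im = 0
  · simp [sliceEmb_mem_realLine_iff hJ, hz]
  · have h1 : (1 : Hq) ∈ span ℝ {1, I} := subset_span (Set.mem_insert _ _)
    simp only [Set.mem_preimage, Set.mem_sdiff, sliceEmb_mem_realLine_iff hJ, sliceC_eq_span,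
      SetLike.mem_coe, sliceEmb_mem_submodule_iff h1 J hz]
    exact Iff.rfl

lemma isOpen_sliceTopology_iff {Ω : Set Hq} :
    IsOpen[sliceTopology] Ω ↔ ∀ I ∈ SphereS, IsOpen (sliceEmb I ⁻¹' Ω) := by
  unfold sliceTopology
  simp only [isOpen_iSup_iff, isOpen_coinduced]

lemma continuous_sliceEmb (I : Hq) : Continuous (sliceEmb I) := by
  rw [funext (sliceEmb_eq_smul I)]
  fun_prop

lemma sliceTopology_le : sliceTopology ≤ (inferInstance : TopologicalSpace Hq) :=
  iSup₂_le fun I _ => (continuous_sliceEmb I).coinduced_le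

lemma isOpen_sliceTopology_sliceC_diff_realLine (I : Hq) :
    IsOpen[sliceTopology] (sliceC I \ realLine) := by
  refine isOpen_sliceTopology_iff.2 fun J hJ => ?_
  rw [preimage_sliceEmb_sliceC_diff_realLine I hJ]
  exact isOpen_const.inter (isOpen_ne_fun Complex.continuous_im continuous_const)

lemma interior_sliceC_eq_empty (I : Hq) : interior (sliceC I) = ∅ := by
  by_contra h
  have htop : span ℝ {1, I} = ⊤ :=
    (span ℝ {1, I}).eq_top_of_nonempty_interior'
      (sliceC_eq_span I ▸ Set.nonempty_iff_ne_empty.2 h)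
  have h2 : Module.finrank ℝ (span ℝ {1, I}) ≤ 2 := by
    classical
    have h := (finrank_span_finset_le_card (R := ℝ) ({1, I} : Finset Hq)).trans Finset.card_le_two
    rwa [Set.finrank, Finset.coe_insert, Finset.coe_singleton] at h
  rw [htop, finrank_top ℝ Hq, Quaternion.finrank_eq_four (R := ℝ)] at h2
  omega

lemma not_isOpen_sliceC_diff_realLine {I : Hq} (hI : I ∈ SphereS) :
    ¬ IsOpen (sliceC I \ realLine) := by
  intro hopen
  have hmem : I ∈ sliceC I \ realLine :=
    ⟨⟨Complex.I, by simp [sliceEmb]⟩, notMem_realLine_of_mem_sphereS hI⟩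
  have := interior_mono Set.sdiff_subset (hopen.interior_eq.symm ▸ hmem)
  rwa [interior_sliceC_eq_empty] at this

lemma ofComplex_I_mem_sphereS : Quaternion.ofComplex Complex.I ∈ SphereS := by
  change _ ^ 2 = _
  rw [← map_pow, Complex.I_sq, map_neg, map_one]

/-- The slice-topology is strictly finer than the Euclidean topology on ℍ. -/
theorem sliceTopology_strictly_finer :
    (∀ Ω : Set Hq, IsOpen Ω → @IsOpen Hq sliceTopology Ω) ∧
    (∃ Ω : Set Hq, @IsOpen Hq sliceTopology Ω ∧ ¬ IsOpen Ω) :=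
  ⟨fun Ω hΩ => sliceTopology_le Ω hΩ,
    ⟨_, isOpen_sliceTopology_sliceC_diff_realLine _,
      not_isOpen_sliceC_diff_realLine ofComplex_I_mem_sphereS⟩⟩
end
end

section
/- If Ω is a slice-connected set in ℍ (connected in the slice-topology) that is slice-open and satisfies Ω ∩ ℝ = ∅, then there exists I ∈ 𝕊 such that Ω ⊆ ℂ_I. -/
noncomputable section

/-!
Write a nonreal quaternion as `x + y I` with `y ≠ 0`, `I ∈ 𝕊`. The imaginary part `y I`
determines `I` up to sign, so two distinct slices `ℂ_I ≠ ℂ_J` meet only along `ℝ`. Hence every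
slice meets `ℂ_I \ ℝ` either in `ℂ_J \ ℝ` or not at all, and meets `ℍ \ ℂ_I` either in
`ℂ_J \ ℝ` or not at all: both sets are slice-open. They are disjoint and cover `ℍ \ ℝ ⊇ Ω`,
so a preconnected `Ω` containing a point of `ℂ_I` lies in `ℂ_I`.
-/

open Quaternion Set Topology

lemma mem_sphereS_iff {I : Hq} : I ∈ SphereS ↔ I.re = 0 ∧ normSq I = 1 := by
  refine ⟨fun hI => ?_, fun ⟨hre, hn⟩ => ?_⟩
  · have hn : normSq I = 1 := by
      have h := congrArg normSq (hI : I ^ 2 = -1)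
      rw [map_pow, normSq_neg, map_one] at h
      exact (pow_eq_one_iff_of_nonneg normSq_nonneg two_ne_zero).mp h
    refine ⟨sq_eq_neg_normSq.mp ?_, hn⟩
    rw [hn, coe_one]
    exact hI
  · show I ^ 2 = -1
    rw [sq_eq_neg_normSq.mpr hre, hn, coe_one]

lemma ne_zero_of_mem_sphereS {I : Hq} (hI : I ∈ SphereS) : I ≠ 0 := by
  rintro rfl
  simpa using (mem_sphereS_iff.mp hI).2

lemma im_eq_self_of_re_eq_zero {q : Hq} (h : q.re = 0) : q.im = q := by
  simpa [h] using re_add_im q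

lemma im_sliceEmb {I : Hq} (hI : I ∈ SphereS) (z : ℂ) : (sliceEmb I z).im = z.im • I := by
  simp [sliceEmb, coe_mul_eq_smul, im_eq_self_of_re_eq_zero (mem_sphereS_iff.mp hI).1]

lemma mem_realLine_iff {q : Hq} : q ∈ realLine ↔ q.im = 0 := by
  refine ⟨?_, fun h => ⟨q.re, by simpa [h] using re_add_im q⟩⟩
  rintro ⟨r, rfl⟩
  exact im_coe r

lemma quaternion_i_mem_sphereS : (⟨0, 1, 0, 0⟩ : Hq) ∈ SphereS :=
  mem_sphereS_iff.mpr ⟨rfl, by norm_num [normSq, MonoidWithZeroHom.coe_mk]⟩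

lemma real_mem_sliceC (I : Hq) (r : ℝ) : (r : Hq) ∈ sliceC I :=
  ⟨r, by simp [sliceEmb]⟩

lemma exists_mem_sliceC (q : Hq) : ∃ I ∈ SphereS, q ∈ sliceC I := by
  obtain him | him := eq_or_ne q.im 0
  · refine ⟨_, quaternion_i_mem_sphereS, ?_⟩
    rw [← re_add_im q, him, add_zero]
    exact real_mem_sliceC _ q.re
  have hn : ‖q.im‖ ≠ 0 := norm_ne_zero_iff.mpr him
  refine ⟨‖q.im‖⁻¹ • q.im, mem_sphereS_iff.mpr ⟨by simp, ?_⟩, ⟨⟨q.re, ‖q.im‖⟩, ?_⟩⟩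
  · rw [normSq_smul, normSq_eq_norm_mul_self]
    field_simp
  · simp only [sliceEmb, coe_mul_eq_smul, smul_smul, mul_inv_cancel₀ hn, one_smul]
    exact re_add_im q

lemma sliceEmb_neg (I : Hq) (z : ℂ) : sliceEmb (-I) z = sliceEmb I (starRingEnd ℂ z) := by
  simp [sliceEmb]

lemma sliceC_neg (I : Hq) : sliceC (-I) = sliceC I := by
  have h : ∀ K : Hq, sliceC (-K) ⊆ sliceC K := by
    rintro K _ ⟨z, rfl⟩
    exact ⟨_, (sliceEmb_neg K z).symm⟩
  exact (h I).antisymm (by simpa using h (-I))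

lemma eq_or_eq_neg_of_sliceEmb_eq {I J : Hq} (hI : I ∈ SphereS) (hJ : J ∈ SphereS) {z w : ℂ}
    (hz : z.im ≠ 0) (h : sliceEmb J z = sliceEmb I w) : J = I ∨ J = -I := by
  have hJI : J = (w.im / z.im) • I := by
    have him := congrArg Quaternion.im h
    rw [im_sliceEmb hJ, im_sliceEmb hI] at him
    rw [div_eq_inv_mul, mul_smul, ← him, inv_smul_smul₀ hz]
  have hc : (w.im / z.im) ^ 2 = 1 := by
    have hn := congrArg normSq hJI
    rwa [normSq_smul, (mem_sphereS_iff.mp hI).2, (mem_sphereS_iff.mp hJ).2, mul_one, eq_comm] at hn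
  rcases sq_eq_one_iff.mp hc with hc | hc <;> rw [hJI, hc]
  exacts [Or.inl (one_smul _ _), Or.inr (neg_one_smul _ _)]

lemma preimage_sliceEmb_realLine {J : Hq} (hJ : J ∈ SphereS) :
    sliceEmb J ⁻¹' realLine = {z | z.im = 0} := by
  ext z
  simp [mem_realLine_iff, im_sliceEmb hJ, smul_eq_zero, ne_zero_of_mem_sphereS hJ]

lemma preimage_sliceEmb_sliceC {I J : Hq} (hI : I ∈ SphereS) (hJ : J ∈ SphereS) :
    sliceEmb J ⁻¹' sliceC I = univ ∨ sliceEmb J ⁻¹' sliceC I = {z | z.im = 0} := by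
  by_cases hJI : J = I ∨ J = -I
  · left
    rcases hJI with rfl | rfl
    · exact preimage_range _
    · rw [← sliceC_neg]; exact preimage_range _
  · right
    ext z
    refine ⟨fun ⟨w, hw⟩ => by_contra fun hz => hJI ?_, fun hz => ?_⟩
    · exact eq_or_eq_neg_of_sliceEmb_eq hI hJ hz hw.symm
    · rw [← preimage_sliceEmb_realLine hJ] at hz
      obtain ⟨r, hr⟩ := hz
      rw [mem_preimage, ← hr]
      exact real_mem_sliceC I r

lemma isOpen_slice_iff {S : Set Hq} :
    IsOpen[sliceTopology] S ↔ ∀ I ∈ SphereS, IsOpen (sliceEmb I ⁻¹' S) := by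
  rw [sliceTopology]
  simp only [isOpen_iSup_iff, isOpen_coinduced]

lemma isClosed_setOf_im_eq_zero : IsClosed {z : ℂ | z.im = 0} :=
  isClosed_eq Complex.continuous_im continuous_const

lemma isOpen_sliceC_diff_realLine {I : Hq} (hI : I ∈ SphereS) :
    IsOpen[sliceTopology] (sliceC I \ realLine) := by
  refine isOpen_slice_iff.mpr fun J hJ => ?_
  rw [preimage_sdiff, preimage_sliceEmb_realLine hJ]
  rcases preimage_sliceEmb_sliceC hI hJ with h | h <;> rw [h]
  · rw [← compl_eq_univ_sdiff]; exact isClosed_setOf_im_eq_zero.isOpen_compl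
  · rw [sdiff_self]; exact isOpen_empty

lemma isOpen_compl_sliceC {I : Hq} (hI : I ∈ SphereS) : IsOpen[sliceTopology] (sliceC I)ᶜ := by
  refine isOpen_slice_iff.mpr fun J hJ => ?_
  rw [preimage_compl]
  rcases preimage_sliceEmb_sliceC hI hJ with h | h <;> rw [h]
  · rw [compl_univ]; exact isOpen_empty
  · exact isClosed_setOf_im_eq_zero.isOpen_compl

theorem sliceConnected_no_real_subset_slice_general (Ω : Set Hq)
    (hconn : @IsPreconnected Hq sliceTopology Ω)
    (hR : Ω ∩ realLine = ∅) :
    ∃ I ∈ SphereS, Ω ⊆ sliceC I := by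
  obtain rfl | ⟨q, hq⟩ := Ω.eq_empty_or_nonempty
  · exact ⟨_, quaternion_i_mem_sphereS, empty_subset _⟩
  obtain ⟨I, hI, hqI⟩ := exists_mem_sliceC q
  refine ⟨I, hI, ?_⟩
  have hcover : Ω ⊆ (sliceC I \ realLine) ∪ (sliceC I)ᶜ := fun p hp => by
    by_cases hpI : p ∈ sliceC I
    · exact Or.inl ⟨hpI, fun hpR => (disjoint_iff_inter_eq_empty.mpr hR).notMem_of_mem_left hp hpR⟩
    · exact Or.inr hpI
  rcases @IsPreconnected.subset_or_subset Hq sliceTopology _ _ _ (isOpen_sliceC_diff_realLine hI)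
    (isOpen_compl_sliceC hI) (disjoint_compl_right.mono_left sdiff_subset) hcover hconn with h | h
  · exact h.trans sdiff_subset
  · exact absurd hqI (h hq)

/-- A slice-open, slice-connected set avoiding the reals lies in a single slice. -/
theorem sliceConnected_no_real_subset_slice (Ω : Set Hq)
    (hopen : @IsOpen Hq sliceTopology Ω)
    (hconn : @IsPreconnected Hq sliceTopology Ω)
    (hR : Ω ∩ realLine = ∅) :
    ∃ I ∈ SphereS, Ω ⊆ sliceC I :=
  sliceConnected_no_real_subset_slice_general Ω hconn hR
end
end

section
/- Let 𝒢₁ = (G₁, π₁, x₁) and 𝒢₂ = (G₂, π₂, x₂) be slice-domains over ℍ with distinguished point. If φ₁ : G₁ → G₂ and φ₂ : G₂ → G₁ are continuous fiber-preserving maps (π₂ ∘ φ₁ = π₁, π₁ ∘ φ₂ = π₂) with φ₁(x₁) = x₂ and φ₂(x₂) = x₁, then φ₁ is a homeomorphism and φ₁⁻¹ = φ₂. -/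
noncomputable section

/-- Mutually fiber-preserving maps between equivalent slice-domains over ℍ are inverse
homeomorphisms. -/
theorem fiberPreserving_homeomorph {G₁ G₂ : Type*}
    [TopologicalSpace G₁] [T2Space G₁] [ConnectedSpace G₁]
    [TopologicalSpace G₂] [T2Space G₂] [ConnectedSpace G₂]
    (π₁ : G₁ → Hq) (π₂ : G₂ → Hq)
    (hπ₁ : @IsLocalHomeomorph G₁ Hq _ sliceTopology π₁)
    (hπ₂ : @IsLocalHomeomorph G₂ Hq _ sliceTopology π₂)
    (x₁ : G₁) (x₂ : G₂) (φ₁ : G₁ → G₂) (φ₂ : G₂ → G₁)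
    (hc₁ : Continuous φ₁) (hc₂ : Continuous φ₂)
    (hf₁ : π₂ ∘ φ₁ = π₁) (hf₂ : π₁ ∘ φ₂ = π₂)
    (hx₁ : φ₁ x₁ = x₂) (hx₂ : φ₂ x₂ = x₁) :
    IsHomeomorph φ₁ ∧ Function.LeftInverse φ₂ φ₁ ∧ Function.RightInverse φ₂ φ₁ := by
  have inj₁ : IsLocallyInjective π₁ :=
    @IsLocalHomeomorph.isLocallyInjective _ _ _ sliceTopology _ hπ₁
  have inj₂ : IsLocallyInjective π₂ :=
    @IsLocalHomeomorph.isLocallyInjective _ _ _ sliceTopology _ hπ₂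
  have hleft : φ₂ ∘ φ₁ = id := by
    refine (T2Space.isSeparatedMap π₁).eq_of_comp_eq inj₁ (hc₂.comp hc₁) continuous_id ?_ x₁ ?_
    · rw [← Function.comp_assoc, hf₂, hf₁]; rfl
    · simp [hx₁, hx₂]
  have hright : φ₁ ∘ φ₂ = id := by
    refine (T2Space.isSeparatedMap π₂).eq_of_comp_eq inj₂ (hc₁.comp hc₂) continuous_id ?_ x₂ ?_
    · rw [← Function.comp_assoc, hf₁, hf₂]; rfl
    · simp [hx₁, hx₂]
  have hl : Function.LeftInverse φ₂ φ₁ := fun a => congrFun hleft a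
  have hr : Function.RightInverse φ₂ φ₁ := fun a => congrFun hright a
  exact ⟨(Homeomorph.mk ⟨φ₁, φ₂, hl, hr⟩ hc₁ hc₂).isHomeomorph, hl, hr⟩
end
end

section
/- Let N ≥ 1 and K = (K₁, ..., K_N) ∈ 𝕊^N. For m ∈ {1, ..., 2^N} with binary expansion m−1 = (m_N ... m₁)₂, define K(m) = ∏_{i=N}^{1} (K_i K_{i−1})^{m_i} where K₀ = 1 (product taken in decreasing index order). Then for each m, K_N · K(m) = K(2^N + 1 − m) · (−1)^{N+m}. Equivalently, writing ζ(K) = (K(1), ..., K(2^N)) as a row vector and σ_N the 2^N × 2^N real matrix with entries σ_{i,j} = (−1)^{N+j} if i + j = 2^N + 1 and 0 otherwise, one has K_N ζ(K) = ζ(K) σ_N. -/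
noncomputable section

def zt (K : ℕ → Hq) (N n : ℕ) : Hq :=
  ((List.range N).reverse.map
    (fun j => (K (j + 1) * K j) ^ (if Nat.testBit n j then 1 else 0))).prod

lemma zetaTerm_eq (K : ℕ → Hq) (N m : ℕ) : zetaTerm K N m = zt K N (m - 1) := rfl

lemma zt_zero (K : ℕ → Hq) (n : ℕ) : zt K 0 n = 1 := rfl

lemma zt_congr {K : ℕ → Hq} {N n m : ℕ} (h : ∀ j < N, n.testBit j = m.testBit j) :
    zt K N n = zt K N m := by
  unfold zt
  congr 1
  apply List.map_congr_left
  intro j hj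
  rw [List.mem_reverse, List.mem_range] at hj
  rw [h j hj]

lemma zt_mod (K : ℕ → Hq) (N n : ℕ) : zt K N n = zt K N (n % 2 ^ N) := by
  apply zt_congr
  intro j hj
  rw [Nat.testBit_mod_two_pow]
  simp [hj]

lemma zt_succ (K : ℕ → Hq) (N n : ℕ) : zt K (N + 1) n =
    (K (N + 1) * K N) ^ (if n.testBit N then 1 else 0) * zt K N n := by
  unfold zt
  rw [List.range_succ, List.reverse_append]
  simp

lemma zt_main (K : ℕ → Hq) (hK0 : K 0 = 1) :
    ∀ N, 1 ≤ N → (∀ i, 1 ≤ i → i ≤ N → K i ∈ SphereS) →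
    ∀ n < 2 ^ N, K N * zt K N n = zt K N (2 ^ N - 1 - n) * (-1 : Hq) ^ (N + n + 1) := by
  intro N
  induction N with
  | zero => intro h; exact absurd h (by omega)
  | succ N ih =>
    intro _ hK n hn
    rcases Nat.eq_zero_or_pos N with h0 | hpos
    · subst h0
      have h1 : K 1 * K 1 = -1 := by
        have := hK 1 le_rfl le_rfl
        simpa [SphereS, sq] using this
      have t0 : Nat.testBit 0 0 = false := by decide
      have t1 : Nat.testBit 1 0 = true := by decide
      interval_cases n <;>
        norm_num [zt_succ, zt_zero, t0, t1, hK0, h1, pow_succ]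
    · have hN : 1 ≤ N := hpos
      have hKN : ∀ i, 1 ≤ i → i ≤ N → K i ∈ SphereS :=
        fun i h1 h2 => hK i h1 (le_trans h2 (Nat.le_succ N))
      have ihN := ih hN hKN
      have hN1sq : K (N + 1) * K (N + 1) = -1 := by
        simpa [SphereS, sq] using hK (N + 1) (by omega) le_rfl
      have hNsq : K N * K N = -1 := by
        simpa [SphereS, sq] using hK N hN (by omega)
      have h2p : (2:ℕ) ^ (N + 1) = 2 * 2 ^ N := by rw [pow_succ]; ring
      have h2pos : (1:ℕ) ≤ 2 ^ N := Nat.one_le_two_pow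
      by_cases hb : n < 2 ^ N
      · have hr : 2 ^ N - 1 - n < 2 ^ N := by omega
        have ht : n.testBit N = false := Nat.testBit_lt_two_pow hb
        have hc : 2 ^ (N + 1) - 1 - n = 2 ^ N + (2 ^ N - 1 - n) := by omega
        have htc : (2 ^ N + (2 ^ N - 1 - n)).testBit N = true := by
          rw [Nat.testBit_eq_decide_div_mod_eq]
          have hd : (2 ^ N + (2 ^ N - 1 - n)) / 2 ^ N = 1 := by
            rw [Nat.add_div_left _ (by omega), Nat.div_eq_of_lt hr]
          simp [hd]
        have hmod : (2 ^ N + (2 ^ N - 1 - n)) % 2 ^ N = 2 ^ N - 1 - n := by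
          rw [Nat.add_mod_left]
          exact Nat.mod_eq_of_lt hr
        rw [hc, zt_succ, zt_succ, ht, htc]
        simp only [reduceIte, Bool.false_eq_true, if_false, if_true, pow_zero, pow_one, one_mul]
        rw [zt_mod K N (2 ^ N + (2 ^ N - 1 - n)), hmod]
        have key := ihN n hb
        set s := (-1 : Hq) ^ (N + n + 1) with hs_def
        have hss : s * s = 1 := by
          rw [hs_def, ← pow_add]
          exact Even.neg_one_pow ⟨N + n + 1, by ring⟩
        have hzr : zt K N (2 ^ N - 1 - n) = K N * zt K N n * s := by
          rw [key, mul_assoc, hss, mul_one]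
        have hsign : (-1 : Hq) ^ (N + 1 + n + 1) = -s := by
          rw [hs_def]
          have he : N + 1 + n + 1 = (N + n + 1) + 1 := by omega
          rw [he, pow_succ, mul_neg_one]
        rw [hzr, hsign]
        have h1 : ∀ x : Hq, K N * (K N * x) = -x := by
          intro x; rw [← mul_assoc, hNsq, neg_one_mul]
        have hrhs : (K (N+1) * K N) * (K N * zt K N n * s) * -s
            = K (N+1) * ((K N * (K N * zt K N n)) * (s * -s)) := by
          simp only [mul_assoc]
        rw [hrhs, h1, mul_neg, hss]
        simp
      · have hrlt : n - 2 ^ N < 2 ^ N := by omega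
        have hnr : n = 2 ^ N + (n - 2 ^ N) := by omega
        have ht : n.testBit N = true := by
          rw [Nat.testBit_eq_decide_div_mod_eq]
          have hd : n / 2 ^ N = 1 := by
            rw [hnr, Nat.add_div_left _ (by omega), Nat.div_eq_of_lt hrlt]
          simp [hd]
        have hmodn : n % 2 ^ N = n - 2 ^ N := by
          conv_lhs => rw [hnr]
          rw [Nat.add_mod_left]
          exact Nat.mod_eq_of_lt hrlt
        have hc : 2 ^ (N + 1) - 1 - n = 2 ^ N - 1 - (n - 2 ^ N) := by omega
        have htc : (2 ^ N - 1 - (n - 2 ^ N)).testBit N = false :=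
          Nat.testBit_lt_two_pow (by omega)
        rw [hc, zt_succ, zt_succ, ht, htc]
        simp only [reduceIte, Bool.false_eq_true, if_false, if_true, pow_zero, pow_one, one_mul]
        rw [zt_mod K N n, hmodn]
        have key := ihN (n - 2 ^ N) hrlt
        have hsign : (-1 : Hq) ^ (N + 1 + n + 1) = -(-1 : Hq) ^ (N + (n - 2 ^ N) + 1) := by
          have he : N + 1 + n + 1 = (N + (n - 2 ^ N) + 1) + (2 ^ N + 1) := by omega
          rw [he, pow_add]
          have h2 : (-1 : Hq) ^ (2 ^ N + 1) = -1 := by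
            rw [pow_add, pow_one,
              Even.neg_one_pow (Nat.even_pow.mpr ⟨even_two, by omega⟩), one_mul]
          rw [h2, mul_neg_one]
        rw [hsign, mul_neg, ← key]
        rw [← mul_assoc, ← mul_assoc, hN1sq]
        simp [mul_assoc]

/-- The intertwining identity `K_N K(m) = K(2^N+1-m)·(−1)^{N+m}`, equivalently
`K_N ζ(K) = ζ(K) σ_N`. -/
theorem intertwining_identity (N : ℕ) (hN : 1 ≤ N) (K : ℕ → Hq) (hK0 : K 0 = 1)
    (hK : ∀ i, 1 ≤ i → i ≤ N → K i ∈ SphereS) :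
    (∀ m, 1 ≤ m → m ≤ 2 ^ N →
      K N * zetaTerm K N m = zetaTerm K N (2 ^ N + 1 - m) * (-1 : Hq) ^ (N + m)) ∧
    (∀ j : Fin (2 ^ N), K N * zetaTerm K N ((j : ℕ) + 1) =
      ∑ i : Fin (2 ^ N), zetaTerm K N ((i : ℕ) + 1) * ((sigmaMat N i j : ℝ) : Hq)) := by
  have h2pos : (1:ℕ) ≤ 2 ^ N := Nat.one_le_two_pow
  constructor
  · intro m hm1 hm2
    rw [zetaTerm_eq, zetaTerm_eq]
    have e1 : 2 ^ N + 1 - m - 1 = 2 ^ N - 1 - (m - 1) := by omega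
    have e2 : N + m = N + (m - 1) + 1 := by omega
    rw [e1, e2]
    exact zt_main K hK0 N hN hK (m - 1) (by omega)
  · intro j
    have hj : (j : ℕ) < 2 ^ N := j.2
    set i0 : Fin (2 ^ N) := ⟨2 ^ N - 1 - (j : ℕ), by omega⟩ with hi0
    rw [Finset.sum_eq_single_of_mem i0 (Finset.mem_univ _)]
    · have hcond : (i0 : ℕ) + (j : ℕ) = 2 ^ N - 1 := by
        simp only [hi0]
        omega
      rw [zetaTerm_eq, zetaTerm_eq]
      have e1 : (j : ℕ) + 1 - 1 = (j : ℕ) := by omega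
      have e2 : (i0 : ℕ) + 1 - 1 = 2 ^ N - 1 - (j : ℕ) := by simp [hi0]
      rw [e1, e2]
      have hσ : sigmaMat N i0 j = (-1 : ℝ) ^ (N + (j : ℕ) + 1) := by
        simp [sigmaMat, hcond]
      rw [hσ]
      have hcast : (((-1 : ℝ) ^ (N + (j : ℕ) + 1) : ℝ) : Hq)
          = (-1 : Hq) ^ (N + (j : ℕ) + 1) := by
        push_cast
        ring
      rw [hcast]
      exact zt_main K hK0 N hN hK j hj
    · intro b _ hb
      have hne : ¬ ((b : ℕ) + (j : ℕ) = 2 ^ N - 1) := by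
        intro h
        apply hb
        apply Fin.ext
        simp only [hi0]
        omega
      simp [sigmaMat, hne]
end
end

section
/- Let N ≥ 1 and J = (J_{i,j}) ∈ M_{2^N × N}(𝕊) with rows J_i ∈ 𝕊^N, and suppose the 2^N × 2^N quaternionic matrix 𝓜(J) whose i-th row is ζ(J_i) = (J_i(1), ..., J_i(2^N)) is invertible. Then σ_N 𝓜(J)⁻¹ = 𝓜(J)⁻¹ D_N(J), where D_N(J) = diag(J_{1,N}, J_{2,N}, ..., J_{2^N,N}) and σ_N is the real matrix with σ_{i,j} = (−1)^{N+j} if i+j = 2^N+1 and 0 otherwise. -/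
/-!
For imaginary units `I, J` (so `I² = J² = -1`) one has `I (IJ)^b = -(IJ)^(1-b) J` for `b ∈ {0, 1}`.
Pushing `K_N` through the factors of `K(m)` from the top therefore flips every binary digit of
`m - 1`, i.e. replaces `m` by `2^N + 1 - m`, and ends at `K_0 = 1`; counting signs this is
`K_N ζ(K) = ζ(K) σ_N`. Row by row it says `D_N(J) 𝓜(J) = 𝓜(J) σ_N`, and conjugating by the
inverse of `𝓜(J)` gives the claim.
-/

noncomputable section

lemma zetaTerm_succ (K : ℕ → Hq) (N m : ℕ) :
    zetaTerm K (N + 1) m =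
      (K (N + 1) * K N) ^ (if (m - 1).testBit N then 1 else 0) * zetaTerm K N m := by
  simp [zetaTerm, List.range_succ]

lemma mul_mul_pow_ite_eq_neg {R : Type*} [Ring R] {I J : R} (hI : I * I = -1)
    (hJ : J * J = -1) (b : Bool) :
    I * (I * J) ^ (if b then 1 else 0) = -((I * J) ^ (if !b then 1 else 0) * J) := by
  cases b <;> simp [← mul_assoc, hI, mul_assoc I J J, hJ]

lemma mul_self_eq_neg_one_of_mem_sphereS {q : Hq} (hq : q ∈ SphereS) : q * q = -1 := by
  simpa [SphereS, sq] using hq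

theorem mul_zetaTerm_eq_neg_one_pow_mul_zetaTerm (K : ℕ → Hq) (hK0 : K 0 = 1) {N m m' : ℕ}
    (hN : 1 ≤ N) (hK : ∀ k, 1 ≤ k → k ≤ N → K k ∈ SphereS)
    (hm : ∀ j < N, m'.testBit j = !m.testBit j) :
    K N * zetaTerm K N (m + 1) = (-1) ^ (N + m + 1) * zetaTerm K N (m' + 1) := by
  induction N, hN using Nat.le_induction with
  | base =>
    have hK1 := mul_self_eq_neg_one_of_mem_sphereS (hK 1 le_rfl le_rfl)
    have hm0 := hm 0 one_pos
    simp only [Nat.testBit_zero] at hm0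
    rcases Nat.even_or_odd m with h | h <;>
      simp_all [zetaTerm, Nat.even_iff, Nat.odd_iff, pow_succ]
  | succ N hN ih =>
    have hsq (k : ℕ) (h1 : 1 ≤ k) (h2 : k ≤ N + 1) : K k * K k = -1 :=
      mul_self_eq_neg_one_of_mem_sphereS (hK k h1 h2)
    rw [zetaTerm_succ, zetaTerm_succ, Nat.add_sub_cancel, Nat.add_sub_cancel, ← mul_assoc,
      mul_mul_pow_ite_eq_neg (hsq _ le_add_self le_rfl) (hsq N hN N.le_succ),
      ← hm N N.lt_succ_self, neg_mul, mul_assoc,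
      ih (fun k h1 h2 => hK k h1 (h2.trans N.le_succ)) (fun j hj => hm j (hj.trans N.lt_succ_self)),
      show N + 1 + m + 1 = N + m + 1 + 1 by ring, pow_succ _ (N + m + 1), mul_neg_one, neg_mul,
      ((Commute.neg_one_left _).pow_left _).left_comm]

/-- The matrix `𝓜(J)` whose `i`-th row is `ζ(J_i)`. -/
def zetaMatrix {N : ℕ} (J : Fin (2 ^ N) → ℕ → Hq) : Matrix (Fin (2 ^ N)) (Fin (2 ^ N)) Hq :=
  Matrix.of fun i m => zetaTerm (J i) N ((m : ℕ) + 1)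

lemma sigmaMat_apply (N : ℕ) (i j : Fin (2 ^ N)) :
    sigmaMat N i j = if i = j.rev then (-1) ^ (N + j + 1) else 0 := by
  have : (i : ℕ) + j = 2 ^ N - 1 ↔ i = j.rev := by
    rw [Fin.ext_iff, Fin.val_rev]
    omega
  simp only [sigmaMat, Matrix.of_apply, this]

lemma mul_sigmaMat_apply {N : ℕ} (A : Matrix (Fin (2 ^ N)) (Fin (2 ^ N)) Hq) (i j : Fin (2 ^ N)) :
    (A * (sigmaMat N).map (fun r => (r : Hq))) i j = A i j.rev * (-1) ^ (N + j + 1) := by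
  simp [Matrix.mul_apply, sigmaMat_apply, apply_ite (fun r : ℝ => (r : Hq))]

lemma testBit_val_rev {n : ℕ} (m : Fin (2 ^ n)) {j : ℕ} (hj : j < n) :
    (m.rev : ℕ).testBit j = !(m : ℕ).testBit j := by
  simp [Nat.testBit_two_pow_sub_succ m.isLt, hj]

theorem diagonal_mul_zetaMatrix {N : ℕ} (hN : 1 ≤ N) (J : Fin (2 ^ N) → ℕ → Hq)
    (hJ0 : ∀ i, J i 0 = 1) (hJS : ∀ i k, 1 ≤ k → k ≤ N → J i k ∈ SphereS) :
    Matrix.diagonal (fun i => J i N) * zetaMatrix J =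
      zetaMatrix J * (sigmaMat N).map (fun r => (r : Hq)) := by
  refine Matrix.ext fun i j => ?_
  rw [Matrix.diagonal_mul, mul_sigmaMat_apply, zetaMatrix, Matrix.of_apply, Matrix.of_apply,
    mul_zetaTerm_eq_neg_one_pow_mul_zetaTerm (J i) (hJ0 i) hN (hJS i) (fun _ => testBit_val_rev j)]
  exact ((Commute.neg_one_left _).pow_left _).eq

/-- If `𝓜(J)` is invertible then `σ_N 𝓜(J)⁻¹ = 𝓜(J)⁻¹ D_N(J)`. -/
theorem sigma_inv_intertwine (N : ℕ) (hN : 1 ≤ N)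
    (J : Fin (2 ^ N) → ℕ → Hq)
    (hJ0 : ∀ i, J i 0 = 1)
    (hJS : ∀ i k, 1 ≤ k → k ≤ N → J i k ∈ SphereS)
    (B : Matrix (Fin (2 ^ N)) (Fin (2 ^ N)) Hq)
    (hB1 : (Matrix.of fun i m => zetaTerm (J i) N ((m : ℕ) + 1) :
      Matrix (Fin (2 ^ N)) (Fin (2 ^ N)) Hq) * B = 1)
    (hB2 : B * (Matrix.of fun i m => zetaTerm (J i) N ((m : ℕ) + 1) :
      Matrix (Fin (2 ^ N)) (Fin (2 ^ N)) Hq) = 1) :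
    (sigmaMat N).map (fun r => (r : Hq)) * B =
      B * Matrix.diagonal (fun i => J i N) := by
  let M : (Matrix (Fin (2 ^ N)) (Fin (2 ^ N)) Hq)ˣ := ⟨zetaMatrix J, B, hB1, hB2⟩
  have hMσ : SemiconjBy (M : Matrix _ _ Hq) ((sigmaMat N).map (fun r => (r : Hq)))
      (Matrix.diagonal (fun i => J i N)) :=
    (diagonal_mul_zetaMatrix hN J hJ0 hJS).symm
  exact (SemiconjBy.units_inv_symm_left hMσ).eq.symm
end
end
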